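/- Let F_ij : ℝ → ℝ, i,j = 1,…,m, satisfy |F_ij(u) − F_ij(v)| ≤ L_ij|u − v| for all u,v ∈ ℝ, where L_ij ≥ 0, and let L be the m×m matrix (L_ij). Suppose at least one of the following conditions holds: (1) max|λ(L)| < 1, where the maximum is over all (complex) eigenvalues of L; (2) max_i Σ_{j=1}^m L_ij < 1; (3) max_j Σ_{i=1}^m L_ij < 1; (4) Σ_{i=1}^m Σ_{j=1}^m L_ij² < 1. Then the system of equations u_i = Σ_{j=1}^m F_ij(u_j), i = 1,…,m, has a unique solution (u_1,…,u_m) ∈ ℝ^m. -/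

import Mathlib

/-!
Write `T u = (∑ⱼ F i j (u j))ᵢ`. The Lipschitz bounds say `|T u - T v| ≤ L |u - v|`
entrywise, so `|Tⁿ u - Tⁿ v| ≤ Lⁿ |u - v|` because `L` is nonnegative. Each of the four
conditions makes `Lⁿ → 0`: (2), (3) and (4) bound a submultiplicative norm by `1` (the max
row sum norm of `L`, that of `Lᵀ`, the Frobenius norm of `L`), and (1) gives `‖Lⁿ‖ ≤ rⁿ` for
some `r < 1` by Gelfand's formula. Hence some `Lⁿ` has max row sum norm `< 1`, so `Tⁿ` is a
contraction of `(ℝᵐ, ‖·‖∞)`, and its unique fixed point is the unique fixed point of `T`.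
-/

open Filter Topology Function Matrix

section SpectralRadius

variable {A : Type*} [NormedRing A] [NormedAlgebra ℂ A] [CompleteSpace A]

theorem spectralRadius_lt_one_of_forall_norm_lt_one {a : A}
    (h : ∀ z ∈ spectrum ℂ a, ‖z‖ < 1) : spectralRadius ℂ a < 1 := by
  rcases (spectrum ℂ a).eq_empty_or_nonempty with hσ | hσ
  · simp [spectralRadius, hσ]
  · exact_mod_cast spectrum.spectralRadius_lt_of_forall_lt_of_nonempty hσ
      fun z hz => by exact_mod_cast h z hz

theorem tendsto_pow_atTop_nhds_zero_of_spectralRadius_lt_one {a : A}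
    (h : spectralRadius ℂ a < 1) : Tendsto (a ^ ·) atTop (𝓝 0) := by
  obtain ⟨r, hρr, hr1⟩ := ENNReal.lt_iff_exists_nnreal_btwn.1 h
  have hgelfand := spectrum.pow_nnnorm_pow_one_div_tendsto_nhds_spectralRadius a
  have hbound : ∀ᶠ n : ℕ in atTop, ‖a ^ n‖ ≤ (r : ℝ) ^ n := by
    filter_upwards [hgelfand.eventually_lt_const hρr, eventually_ne_atTop 0] with n hn hn0
    rw [← ENNReal.coe_rpow_of_nonneg _ (by positivity), ENNReal.coe_lt_coe, one_div] at hn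
    rw [← coe_nnnorm, ← NNReal.coe_pow, NNReal.coe_le_coe,
      ← NNReal.rpow_inv_natCast_pow ‖a ^ n‖₊ hn0]
    exact pow_le_pow_left₀ zero_le hn.le n
  exact squeeze_zero_norm' hbound
    (tendsto_pow_atTop_nhds_zero_of_lt_one r.2 (by exact_mod_cast hr1))

end SpectralRadius

section ConvergentMatrix

variable {ι : Type*} [Fintype ι] [DecidableEq ι] {L : Matrix ι ι ℝ}

section LinftyOpNorm

attribute [local instance] Matrix.linftyOpNormedRing Matrix.linftyOpNormedAlgebra

theorem Matrix.tendsto_pow_of_rowSums_lt_one (hL : ∀ i j, 0 ≤ L i j)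
    (h : ∀ i, ∑ j, L i j < 1) : Tendsto (L ^ ·) atTop (𝓝 0) := by
  refine tendsto_pow_atTop_nhds_zero_of_norm_lt_one (show ‖L‖₊ < 1 from ?_)
  rw [linfty_opNNNorm_def, Finset.sup_lt_iff zero_lt_one]
  intro i _
  rw [← NNReal.coe_lt_coe, NNReal.coe_sum]
  simpa [Real.norm_of_nonneg (hL i _)] using h i

theorem Matrix.tendsto_pow_of_colSums_lt_one (hL : ∀ i j, 0 ≤ L i j)
    (h : ∀ j, ∑ i, L i j < 1) : Tendsto (L ^ ·) atTop (𝓝 0) := by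
  have hT := ((continuous_id.matrix_transpose).tendsto 0).comp
    (tendsto_pow_of_rowSums_lt_one (L := Lᵀ) (fun i j => hL j i) h)
  simpa only [comp_def, id, transpose_zero, ← transpose_pow, transpose_transpose] using hT

theorem Matrix.tendsto_pow_of_spectrum_norm_lt_one
    (h : ∀ μ ∈ spectrum ℂ (L.map Complex.ofReal), ‖μ‖ < 1) :
    Tendsto (L ^ ·) atTop (𝓝 0) := by
  have hC := tendsto_pow_atTop_nhds_zero_of_spectralRadius_lt_one
    (spectralRadius_lt_one_of_forall_norm_lt_one h)
  have hR := ((continuous_id.matrix_map Complex.continuous_re).tendsto 0).comp hC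
  have hmap (n : ℕ) : L.map Complex.ofReal ^ n = (L ^ n).map Complex.ofReal :=
    (Matrix.map_pow L Complex.ofRealHom n).symm
  simpa [comp_def, hmap, Matrix.map_map] using hR

end LinftyOpNorm

section FrobeniusNorm

attribute [local instance] Matrix.frobeniusNormedRing

theorem Matrix.tendsto_pow_of_sum_sq_lt_one (h : ∑ i, ∑ j, L i j ^ 2 < 1) :
    Tendsto (L ^ ·) atTop (𝓝 0) := by
  refine tendsto_pow_atTop_nhds_zero_of_norm_lt_one ?_
  rw [frobenius_norm_def]
  refine Real.rpow_lt_one (by positivity) ?_ (by norm_num)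
  simpa [Real.rpow_two] using h

end FrobeniusNorm

end ConvergentMatrix

section FixedPoint

variable {ι : Type*} [Fintype ι]

theorem pi_norm_le_norm_of_abs_le {x y : ι → ℝ} (h : |x| ≤ y) : ‖x‖ ≤ ‖y‖ :=
  (pi_norm_le_iff_of_nonneg (norm_nonneg _)).2 fun i =>
    (h i).trans ((le_abs_self _).trans (norm_le_pi_norm y i))

theorem Matrix.mulVec_le_mulVec_of_nonneg {L : Matrix ι ι ℝ} (hL : ∀ i j, 0 ≤ L i j)
    {x y : ι → ℝ} (hxy : x ≤ y) : L *ᵥ x ≤ L *ᵥ y := fun i =>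
  Finset.sum_le_sum fun j _ => mul_le_mul_of_nonneg_left (hxy j) (hL i j)

theorem abs_sum_sub_sum_le_mulVec {F : ι → ι → ℝ → ℝ} {L : Matrix ι ι ℝ}
    (hLip : ∀ i j u v, |F i j u - F i j v| ≤ L i j * |u - v|) (u v : ι → ℝ) :
    |(fun i => ∑ j, F i j (u j)) - fun i => ∑ j, F i j (v j)| ≤ L *ᵥ |u - v| := fun i => by
  simp only [Pi.abs_apply, Pi.sub_apply, ← Finset.sum_sub_distrib]
  exact (Finset.abs_sum_le_sum_abs _ _).trans (Finset.sum_le_sum fun j _ => hLip i j _ _)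

variable [DecidableEq ι] {T : (ι → ℝ) → ι → ℝ} {L : Matrix ι ι ℝ}

theorem abs_iterate_sub_le_pow_mulVec (hL : ∀ i j, 0 ≤ L i j)
    (hT : ∀ u v, |T u - T v| ≤ L *ᵥ |u - v|) (n : ℕ) (u v : ι → ℝ) :
    |T^[n] u - T^[n] v| ≤ (L ^ n) *ᵥ |u - v| := by
  induction n with
  | zero => simp
  | succ n ih =>
    rw [iterate_succ_apply', iterate_succ_apply', pow_succ', ← mulVec_mulVec]
    exact (hT _ _).trans (mulVec_le_mulVec_of_nonneg hL ih)

attribute [local instance] Matrix.linftyOpNormedRing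

theorem lipschitzWith_iterate_of_abs_sub_le_mulVec (hL : ∀ i j, 0 ≤ L i j)
    (hT : ∀ u v, |T u - T v| ≤ L *ᵥ |u - v|) (n : ℕ) : LipschitzWith ‖L ^ n‖₊ T^[n] :=
  LipschitzWith.of_dist_le_mul fun u v => calc
    dist (T^[n] u) (T^[n] v) = ‖T^[n] u - T^[n] v‖ := dist_eq_norm _ _
    _ ≤ ‖(L ^ n) *ᵥ |u - v|‖ :=
        pi_norm_le_norm_of_abs_le (abs_iterate_sub_le_pow_mulVec hL hT n u v)
    _ ≤ ‖L ^ n‖ * ‖|u - v|‖ := linfty_opNorm_mulVec _ _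
    _ = ‖L ^ n‖₊ * dist u v := by simp [Pi.norm_def, dist_eq_norm]

theorem existsUnique_isFixedPt_of_abs_sub_le_mulVec (hL : ∀ i j, 0 ≤ L i j)
    (hT : ∀ u v, |T u - T v| ≤ L *ᵥ |u - v|) (hpow : Tendsto (L ^ ·) atTop (𝓝 0)) :
    ∃! u, IsFixedPt T u := by
  obtain ⟨n, hn⟩ :=
    ((tendsto_zero_iff_norm_tendsto_zero.1 hpow).eventually (gt_mem_nhds one_pos)).exists
  have hcontr : ContractingWith ‖L ^ n‖₊ T^[n] :=
    ⟨hn, lipschitzWith_iterate_of_abs_sub_le_mulVec hL hT n⟩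
  have hfix : IsFixedPt T (hcontr.fixedPoint _) := hcontr.isFixedPt_fixedPoint_iterate
  exact ⟨_, hfix, fun v hv => hcontr.fixedPoint_unique' (hv.iterate n) (hfix.iterate n)⟩

end FixedPoint

/-- Corollary 3.2: if `|F_ij(u) − F_ij(v)| ≤ L_ij|u − v|` and at least one of the
conditions (1) every eigenvalue of `L` has modulus < 1, (2) all row sums of `L` are < 1,
(3) all column sums of `L` are < 1, (4) the sum of squares of the entries of `L` is < 1,
holds, then the system `u_i = Σ_j F_ij(u_j)` has a unique solution. -/
theorem stmt12
    (m : ℕ)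
    (F : Fin m → Fin m → ℝ → ℝ) (L : Matrix (Fin m) (Fin m) ℝ)
    (hL_nonneg : ∀ i j, 0 ≤ L i j)
    (hLip : ∀ i j u v, |F i j u - F i j v| ≤ L i j * |u - v|)
    (hcond :
      (∀ μ : ℂ, μ ∈ spectrum ℂ (L.map (Complex.ofReal)) → ‖μ‖ < 1) ∨
      (∀ i, ∑ j, L i j < 1) ∨
      (∀ j, ∑ i, L i j < 1) ∨
      (∑ i, ∑ j, (L i j) ^ 2 < 1)) :
    ∃! u : Fin m → ℝ, ∀ i, u i = ∑ j, F i j (u j) := by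
  have hpow : Tendsto (L ^ ·) atTop (𝓝 0) := by
    rcases hcond with h | h | h | h
    exacts [tendsto_pow_of_spectrum_norm_lt_one h, tendsto_pow_of_rowSums_lt_one hL_nonneg h,
      tendsto_pow_of_colSums_lt_one hL_nonneg h, tendsto_pow_of_sum_sq_lt_one h]
  obtain ⟨u, hu, huniq⟩ := existsUnique_isFixedPt_of_abs_sub_le_mulVec hL_nonneg
    (abs_sum_sub_sum_le_mulVec hLip) hpow
  exact ⟨u, fun i => (congrFun hu i).symm, fun v hv => huniq v (funext fun i => (hv i).symm)⟩
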